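/- Second-kind error of the mixed code: let X, Y be finite sets, d ∈ ℕ, and ρ : X × Y → S(ℂ^d) a map into density matrices. Let (P_i)_{i∈[M]} be probability distributions on X, (Q_j)_{j∈[N]} probability distributions on Y, and (D_{ij})_{i∈[M],j∈[N]} positive semidefinite matrices with Σ_{i∈[M],j∈[N]} D_{ij} ≤ 𝟙 (in the Loewner order). Let ε ∈ (0,1). Let A, A' ⊆ [M] and B, B' ⊆ [N] be nonempty subsets satisfying |A ∩ A'|·|B ∩ B'| ≤ ε·|A|·|B|, and suppose for all i ∈ [M], j ∈ [N]: Σ_{x,y} P_i(x)Q_j(y) tr(D_{ij} ρ(x,y)) ≥ 1 − ε. Define P'(x) := (1/|A|) Σ_{i∈A} P_i(x), Q'(y) := (1/|B|) Σ_{j∈B} Q_j(y), and I' := Σ_{r∈A'} Σ_{s∈B'} D_{rs}. Then Σ_{x,y} P'(x)Q'(y) tr(I' ρ(x,y)) ≤ 4ε. -/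

import Mathlib

open Matrix BigOperators
open scoped ComplexOrder

/-- A density matrix: positive semidefinite with trace one. -/
def IsDensityMatrix {d : ℕ} (ρ : Matrix (Fin d) (Fin d) ℂ) : Prop :=
  ρ.PosSemidef ∧ ρ.trace = 1

/-- A probability distribution on a finite set. -/
def IsProbDist {α : Type} [Fintype α] (P : α → ℝ) : Prop :=
  (∀ a, 0 ≤ P a) ∧ ∑ a, P a = 1

/-! Fix a pair `(i, j)` and the product input distribution `P i ⊗ Q j`. Since the `D` form a
sub-POVM, `I' ≤ 𝟙`, so `I'` fires with probability at most `1`; if `(i, j) ∉ A' × B'` then even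
`I' + D i j ≤ ∑ D ≤ 𝟙`, so `I'` fires with probability at most `1 - (1 - ε) = ε`. Averaging over
`A × B`, at most `|A ∩ A'| |B ∩ B'| ≤ ε |A| |B|` pairs contribute `1` and the others `ε`, which
gives the bound `2ε`. -/

open scoped MatrixOrder

namespace Matrix

variable {𝕜 n : Type*} [RCLike 𝕜] [Fintype n]

theorem PosSemidef.trace_mul_nonneg {A B : Matrix n n 𝕜} (hA : A.PosSemidef) (hB : B.PosSemidef) :
    0 ≤ (A * B).trace := by
  classical
  obtain ⟨X, rfl⟩ := CStarAlgebra.nonneg_iff_eq_star_mul_self.mp hA.nonneg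
  rw [star_eq_conjTranspose, mul_assoc, trace_mul_comm]
  exact (hB.mul_mul_conjTranspose_same X).trace_nonneg

theorem re_trace_mul_le_of_le {A B ρ : Matrix n n 𝕜} (hAB : A ≤ B) (hρ : ρ.PosSemidef) :
    RCLike.re (A * ρ).trace ≤ RCLike.re (B * ρ).trace := by
  have h := (RCLike.nonneg_iff.mp ((le_iff.mp hAB).trace_mul_nonneg hρ)).1
  rw [sub_mul, trace_sub, map_sub] at h
  linarith

end Matrix

section avgTrace

variable {X Y 𝕜 n : Type*} [Fintype X] [Fintype Y] [RCLike 𝕜] [Fintype n]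

/-- The probability that the measurement operator `T` fires on the state `ρ x y`, with `(x, y)`
drawn according to the weights `p`. -/
def avgTrace (ρ : X → Y → Matrix n n 𝕜) (p : X → Y → ℝ) (T : Matrix n n 𝕜) : ℝ :=
  ∑ x, ∑ y, p x y * RCLike.re (T * ρ x y).trace

variable {ρ : X → Y → Matrix n n 𝕜} {p : X → Y → ℝ}

@[simp]
theorem avgTrace_zero : avgTrace ρ p 0 = 0 := by
  simp [avgTrace]

theorem avgTrace_sub (T S : Matrix n n 𝕜) :
    avgTrace ρ p (T - S) = avgTrace ρ p T - avgTrace ρ p S := by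
  simp only [avgTrace, sub_mul, trace_sub, map_sub, mul_sub, Finset.sum_sub_distrib]

theorem avgTrace_one [DecidableEq n] (hρ : ∀ x y, (ρ x y).trace = 1)
    (hp : ∑ x, ∑ y, p x y = 1) : avgTrace ρ p 1 = 1 := by
  simp [avgTrace, hρ, hp]

theorem avgTrace_mono (hp : ∀ x y, 0 ≤ p x y) (hρ : ∀ x y, (ρ x y).PosSemidef)
    {T S : Matrix n n 𝕜} (hTS : T ≤ S) : avgTrace ρ p T ≤ avgTrace ρ p S :=
  Finset.sum_le_sum fun x _ ↦ Finset.sum_le_sum fun y _ ↦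
    mul_le_mul_of_nonneg_left (re_trace_mul_le_of_le hTS (hρ x y)) (hp x y)

theorem avgTrace_le_one_sub [DecidableEq n] (hp : ∀ x y, 0 ≤ p x y)
    (hp1 : ∑ x, ∑ y, p x y = 1) (hρ : ∀ x y, (ρ x y).PosSemidef)
    (htr : ∀ x y, (ρ x y).trace = 1) {T S : Matrix n n 𝕜} (hTS : T + S ≤ 1) :
    avgTrace ρ p T ≤ 1 - avgTrace ρ p S := by
  rw [← avgTrace_one htr hp1, ← avgTrace_sub]
  exact avgTrace_mono hp hρ (le_sub_iff_add_le.mpr hTS)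

theorem avgTrace_smul (c : ℝ) (T : Matrix n n 𝕜) :
    avgTrace ρ (c • p) T = c * avgTrace ρ p T := by
  simp only [avgTrace, Pi.smul_apply, smul_eq_mul, Finset.mul_sum, mul_assoc]

theorem avgTrace_sum {K : Type*} (s : Finset K) (p : K → X → Y → ℝ) (T : Matrix n n 𝕜) :
    avgTrace ρ (∑ k ∈ s, p k) T = ∑ k ∈ s, avgTrace ρ (p k) T := by
  simp only [avgTrace, Finset.sum_apply, Finset.sum_mul]
  exact (Finset.sum_congr rfl fun x _ ↦ Finset.sum_comm).trans Finset.sum_comm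

theorem avgTrace_mul_sum_mul_sum {I J : Type*} (a b : ℝ) (s : Finset I) (t : Finset J)
    (f : I → X → ℝ) (g : J → Y → ℝ) (T : Matrix n n 𝕜) :
    avgTrace ρ (fun x y ↦ (a * ∑ i ∈ s, f i x) * (b * ∑ j ∈ t, g j y)) T =
      a * b * ∑ i ∈ s, ∑ j ∈ t, avgTrace ρ (fun x y ↦ f i x * g j y) T := by
  have hp : (fun x y ↦ (a * ∑ i ∈ s, f i x) * (b * ∑ j ∈ t, g j y)) =
      (a * b) • ∑ i ∈ s, ∑ j ∈ t, fun x y ↦ f i x * g j y := by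
    ext x y
    simp only [Pi.smul_apply, Finset.sum_apply, smul_eq_mul, ← Finset.sum_mul_sum]
    ring
  simp only [hp, avgTrace_smul, avgTrace_sum]

theorem avgTrace_sum_le_ite_add [DecidableEq n] (hp : ∀ x y, 0 ≤ p x y)
    (hp1 : ∑ x, ∑ y, p x y = 1) (hρ : ∀ x y, (ρ x y).PosSemidef)
    (htr : ∀ x y, (ρ x y).trace = 1) {κ : Type*} [Fintype κ] [DecidableEq κ]
    {D : κ → Matrix n n 𝕜}
    (hD : ∀ k, (D k).PosSemidef) (hD1 : ∑ k, D k ≤ 1) {ε : ℝ} (hε : 0 ≤ ε) (s : Finset κ)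
    [DecidablePred (· ∈ s)] {k : κ} (hk : 1 - ε ≤ avgTrace ρ p (D k)) :
    avgTrace ρ p (∑ l ∈ s, D l) ≤ (if k ∈ s then 1 else 0) + ε := by
  have hsub : ∑ l ∈ s, D l ≤ ∑ l, D l :=
    Finset.sum_le_univ_sum_of_nonneg fun l ↦ (hD l).nonneg
  split_ifs with hks
  · have h := avgTrace_le_one_sub (S := 0) hp hp1 hρ htr (by simpa using hsub.trans hD1)
    simp only [avgTrace_zero, sub_zero] at h
    linarith
  · have hinsert : ∑ l ∈ s, D l + D k ≤ ∑ l, D l := by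
      rw [add_comm, ← Finset.sum_insert hks]
      exact Finset.sum_le_univ_sum_of_nonneg fun l ↦ (hD l).nonneg
    have h := avgTrace_le_one_sub hp hp1 hρ htr (hinsert.trans hD1)
    linarith

end avgTrace

theorem Finset.sum_sum_ite_mem_product {ι κ R : Type*} [DecidableEq ι] [DecidableEq κ]
    [Semiring R] (A A' : Finset ι) (B B' : Finset κ) :
    ∑ i ∈ A, ∑ j ∈ B, (if (i, j) ∈ A' ×ˢ B' then (1 : R) else 0) =
      (A ∩ A').card * (B ∩ B').card := by
  rw [← Finset.sum_product', Finset.sum_boole, Finset.filter_mem_eq_inter,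
    Finset.product_inter_product, Finset.card_product, Nat.cast_mul]

theorem IsProbDist.sum_sum_mul {α β : Type} [Fintype α] [Fintype β] {P : α → ℝ} {Q : β → ℝ}
    (hP : IsProbDist P) (hQ : IsProbDist Q) : ∑ a, ∑ b, P a * Q b = 1 := by
  rw [← Finset.sum_mul_sum, hP.2, hQ.2, one_mul]

theorem second_kind_error_mixed_code_general {X Y : Type} [Fintype X] [Fintype Y] {d : ℕ}
    (ρ : X → Y → Matrix (Fin d) (Fin d) ℂ)
    (hρ : ∀ x y, IsDensityMatrix (ρ x y))
    {M N : ℕ} (P : Fin M → X → ℝ) (Q : Fin N → Y → ℝ)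
    (hP : ∀ i, IsProbDist (P i)) (hQ : ∀ j, IsProbDist (Q j))
    (D : Fin M → Fin N → Matrix (Fin d) (Fin d) ℂ)
    (hD : ∀ i j, (D i j).PosSemidef)
    (hDsum : ((1 : Matrix (Fin d) (Fin d) ℂ) - ∑ i, ∑ j, D i j).PosSemidef)
    (ε : ℝ) (hε : ε ∈ Set.Ioo (0:ℝ) 1)
    (A A' : Finset (Fin M)) (B B' : Finset (Fin N))
    (hoverlap : ((A ∩ A').card : ℝ) * ((B ∩ B').card : ℝ)
      ≤ ε * (A.card : ℝ) * (B.card : ℝ))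
    (hgood : ∀ i j, 1 - ε ≤ ∑ x, ∑ y, P i x * Q j y * ((D i j * ρ x y).trace).re) :
    ∑ x, ∑ y,
        (((1 : ℝ) / A.card) * ∑ i ∈ A, P i x) *
        (((1 : ℝ) / B.card) * ∑ j ∈ B, Q j y) *
        (((∑ r ∈ A', ∑ s ∈ B', D r s) * ρ x y).trace).re ≤ 4 * ε := by
  have hε0 : 0 ≤ ε := hε.1.le
  set I' := ∑ r ∈ A', ∑ s ∈ B', D r s with hI'
  have hD1 : ∑ k : Fin M × Fin N, D k.1 k.2 ≤ 1 := by
    rw [Fintype.sum_prod_type]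
    exact le_iff.mpr hDsum
  have hpair : ∀ i j, avgTrace ρ (fun x y ↦ P i x * Q j y) I' ≤
      (if (i, j) ∈ A' ×ˢ B' then 1 else 0) + ε := by
    intro i j
    rw [hI', ← Finset.sum_product']
    exact avgTrace_sum_le_ite_add (D := fun k : Fin M × Fin N ↦ D k.1 k.2) (k := (i, j))
      (fun x y ↦ mul_nonneg ((hP i).1 x) ((hQ j).1 y)) ((hP i).sum_sum_mul (hQ j))
      (fun x y ↦ (hρ x y).1) (fun x y ↦ (hρ x y).2) (fun k ↦ hD k.1 k.2) hD1 hε0 _ (hgood i j)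
  have hsum : ∑ i ∈ A, ∑ j ∈ B, avgTrace ρ (fun x y ↦ P i x * Q j y) I' ≤
      2 * ε * (A.card * B.card) := by
    refine (Finset.sum_le_sum fun i _ ↦ Finset.sum_le_sum fun j _ ↦ hpair i j).trans ?_
    simp only [Finset.sum_add_distrib, Finset.sum_sum_ite_mem_product, Finset.sum_const,
      nsmul_eq_mul]
    linarith
  calc _ = avgTrace ρ (fun x y ↦ (1 / A.card * ∑ i ∈ A, P i x) * (1 / B.card * ∑ j ∈ B, Q j y))
        I' := rfl
    _ = (∑ i ∈ A, ∑ j ∈ B, avgTrace ρ (fun x y ↦ P i x * Q j y) I') / (A.card * B.card) := by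
      rw [avgTrace_mul_sum_mul_sum]
      ring
    _ ≤ 2 * ε := div_le_of_le_mul₀ (by positivity) (by positivity) hsum
    _ ≤ 4 * ε := by linarith

/-- **Second-kind error of the mixed code.**  Suppose the sub-POVM `(D_{ij})` decodes every
pair `(i,j)` with probability at least `1 − ε`, and `A, A' ⊆ [M]`, `B, B' ⊆ [N]` are nonempty
subsets with `|A ∩ A'|·|B ∩ B'| ≤ ε·|A|·|B|`.  Then the mixed encoders for `(A,B)` trigger
the identification operator `I' = ∑_{r∈A'} ∑_{s∈B'} D_{rs}` with probability at most `4ε`. -/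
theorem second_kind_error_mixed_code {X Y : Type} [Fintype X] [Fintype Y] {d : ℕ}
    (ρ : X → Y → Matrix (Fin d) (Fin d) ℂ)
    (hρ : ∀ x y, IsDensityMatrix (ρ x y))
    {M N : ℕ} (P : Fin M → X → ℝ) (Q : Fin N → Y → ℝ)
    (hP : ∀ i, IsProbDist (P i)) (hQ : ∀ j, IsProbDist (Q j))
    (D : Fin M → Fin N → Matrix (Fin d) (Fin d) ℂ)
    (hD : ∀ i j, (D i j).PosSemidef)
    (hDsum : ((1 : Matrix (Fin d) (Fin d) ℂ) - ∑ i, ∑ j, D i j).PosSemidef)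
    (ε : ℝ) (hε : ε ∈ Set.Ioo (0:ℝ) 1)
    (A A' : Finset (Fin M)) (B B' : Finset (Fin N))
    (hA : A.Nonempty) (hB : B.Nonempty)
    (hoverlap : ((A ∩ A').card : ℝ) * ((B ∩ B').card : ℝ)
      ≤ ε * (A.card : ℝ) * (B.card : ℝ))
    (hgood : ∀ i j, 1 - ε ≤ ∑ x, ∑ y, P i x * Q j y * ((D i j * ρ x y).trace).re) :
    ∑ x, ∑ y,
        (((1 : ℝ) / A.card) * ∑ i ∈ A, P i x) *
        (((1 : ℝ) / B.card) * ∑ j ∈ B, Q j y) *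
        (((∑ r ∈ A', ∑ s ∈ B', D r s) * ρ x y).trace).re ≤ 4 * ε :=
  second_kind_error_mixed_code_general ρ hρ P Q hP hQ D hD hDsum ε hε A A' B B' hoverlap hgood
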